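/- Let W(p,x) := lim_{k→∞} (B^k ψ)(p,x) be the pointwise limit of the Bellman iterates of ψ. Then for each x ∈ S: (i) the map p ↦ W(p,x) is concave on [0,1]; (ii) W(1,x) = 0; and (iii) the continuation value A(p,x) := Σ_{x'∈S} P(x'|p,x)·W(Φ(x',x,p), x') satisfies 0 ≤ A(p,x) ≤ λ(1−ρ)(1−p) for all p ∈ [0,1]. -/

import Mathlib

open Finset Filter Topology

noncomputable section

/-- `p̄ = p + ρ(1-p)`, the predicted change probability. -/
def pbar (ρ p : ℝ) : ℝ := p + ρ * (1 - p)

/-- Likelihood ratio `L(x',x) = Q₂(x'|x) / Q₁(x'|x)`. -/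
def likeRatio {S : Type*} (Q1 Q2 : S → S → ℝ) (x' x : S) : ℝ := Q2 x x' / Q1 x x'

/-- Bayesian posterior update `Φ(x',x,p)`. -/
def post {S : Type*} (Q1 Q2 : S → S → ℝ) (ρ : ℝ) (x' x : S) (p : ℝ) : ℝ :=
  pbar ρ p * likeRatio Q1 Q2 x' x / (pbar ρ p * likeRatio Q1 Q2 x' x + (1 - pbar ρ p))

/-- Predictive probability `P(x'|p,x)`. -/
def pred {S : Type*} (Q1 Q2 : S → S → ℝ) (ρ : ℝ) (x' : S) (p : ℝ) (x : S) : ℝ :=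
  (1 - pbar ρ p) * Q1 x x' + pbar ρ p * Q2 x x'

/-- The Bellman operator `B`. -/
def bell {S : Type*} [Fintype S] (Q1 Q2 : S → S → ℝ) (ρ lam : ℝ)
    (V : ℝ → S → ℝ) : ℝ → S → ℝ :=
  fun p x => min (lam * (1 - p))
    (p + ∑ x' : S, pred Q1 Q2 ρ x' p x * V (post Q1 Q2 ρ x' x p) x')

/-- The stopping cost `ψ(p,x) = λ(1-p)`. -/
def psi (S : Type*) (lam : ℝ) : ℝ → S → ℝ := fun p _ => lam * (1 - p)

/-!
The Bellman iterates `Bᵏψ` all lie in the class of functions that are concave in `p` on `[0,1]`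
and squeezed between `0` and the stopping cost `λ(1-p)`; this class is closed under pointwise
limits, so it contains `W`, and `W(1,x) = 0` is forced by the squeeze. `B` preserves concavity
because `P(x'|p,x) V(Φ(x',x,p), x') = Q₁(x'|x) D(p) V(N(p)/D(p), x')` with `N`, `D` affine in `p`:
a perspective of `V(·,x')`. The bound on `A` comes from `P(x'|p,x) (1 - Φ(x',x,p)) = Q₁(x'|x)(1 - p̄)`
and `1 - p̄ = (1-ρ)(1-p)`.
-/

open Set

section Convexity

variable {E : Type*} [AddCommGroup E] [Module ℝ E] {s : Set E}

theorem concaveOn_finset_sum {ι : Type*} {t : Finset ι} {f : ι → E → ℝ} (hs : Convex ℝ s)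
    (hf : ∀ i ∈ t, ConcaveOn ℝ s (f i)) : ConcaveOn ℝ s (fun x => ∑ i ∈ t, f i x) := by
  classical
  induction t using Finset.induction with
  | empty => simpa using concaveOn_const 0 hs
  | insert i t hi ih =>
    simp only [Finset.sum_insert hi]
    exact (hf i (mem_insert_self i t)).add
      (ih fun j hj => hf j (mem_insert_of_mem hj))

theorem concaveOn_of_tendsto {α : Type*} {l : Filter α} [l.NeBot] {F : α → E → ℝ} {f : E → ℝ}
    (hs : Convex ℝ s) (hF : ∀ k, ConcaveOn ℝ s (F k))
    (hlim : ∀ x ∈ s, Tendsto (F · x) l (𝓝 (f x))) : ConcaveOn ℝ s f := by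
  refine ⟨hs, fun x hx y hy a b ha hb hab => ?_⟩
  refine le_of_tendsto_of_tendsto' (((hlim x hx).const_smul a).add ((hlim y hy).const_smul b))
    (hlim _ (hs hx hy ha hb hab)) fun k => (hF k).2 hx hy ha hb hab

/-- The perspective `(d, n) ↦ d V(n / d)` of a concave `V` is concave. -/
theorem ConcaveOn.perspective_comp {I : Set ℝ} {V : ℝ → ℝ} (hV : ConcaveOn ℝ I V)
    (hs : Convex ℝ s) (n d : E →ᵃ[ℝ] ℝ) (hd : ∀ x ∈ s, 0 < d x) (hI : ∀ x ∈ s, n x / d x ∈ I) :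
    ConcaveOn ℝ s (fun x => d x * V (n x / d x)) := by
  refine ⟨hs, fun x hx y hy a b ha hb hab => ?_⟩
  have hz := hs hx hy ha hb hab
  set z := a • x + b • y
  have hdx := hd x hx
  have hdy := hd y hy
  have hdz := hd z hz
  have hdz_eq : d z = a * d x + b * d y := Convex.combo_affine_apply hab
  have hnz_eq : n z = a * n x + b * n y := Convex.combo_affine_apply hab
  have hw : a * d x / d z + b * d y / d z = 1 := by
    rw [← add_div, ← hdz_eq, div_self hdz.ne']
  have key := hV.2 (hI x hx) (hI y hy) (by positivity) (by positivity) hw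
  have hcomb : (a * d x / d z) • (n x / d x) + (b * d y / d z) • (n y / d y) = n z / d z := by
    rw [hnz_eq, smul_eq_mul, smul_eq_mul]
    field_simp
  rw [hcomb, smul_eq_mul, smul_eq_mul] at key
  calc a • (d x * V (n x / d x)) + b • (d y * V (n y / d y))
      = d z * (a * d x / d z * V (n x / d x) + b * d y / d z * V (n y / d y)) := by
        simp only [smul_eq_mul]; field_simp
    _ ≤ d z * V (n z / d z) := mul_le_mul_of_nonneg_left key hdz.le

end Convexity

section Posterior

variable {S : Type*} {Q1 Q2 : S → S → ℝ} {ρ p : ℝ} {x' x : S}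

lemma one_sub_pbar (ρ p : ℝ) : 1 - pbar ρ p = (1 - ρ) * (1 - p) := by
  unfold pbar; ring

lemma pbar_mem_Icc (hρ : ρ ∈ Icc (0 : ℝ) 1) (hp : p ∈ Icc (0 : ℝ) 1) :
    pbar ρ p ∈ Icc (0 : ℝ) 1 := by
  have h := one_sub_pbar ρ p
  constructor <;> nlinarith [hρ.1, hρ.2, hp.1, hp.2]

def pbarAffine (ρ : ℝ) : ℝ →ᵃ[ℝ] ℝ := AffineMap.lineMap ρ 1

lemma pbarAffine_apply (ρ p : ℝ) : pbarAffine ρ p = pbar ρ p := by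
  rw [pbarAffine, AffineMap.lineMap_apply_ring, pbar]; ring

variable (Q1 Q2 ρ x' x) in
def postNum : ℝ →ᵃ[ℝ] ℝ := likeRatio Q1 Q2 x' x • pbarAffine ρ

variable (Q1 Q2 ρ x' x) in
def postDen : ℝ →ᵃ[ℝ] ℝ := (likeRatio Q1 Q2 x' x - 1) • pbarAffine ρ + AffineMap.const ℝ ℝ 1

lemma postNum_apply : postNum Q1 Q2 ρ x' x p = pbar ρ p * likeRatio Q1 Q2 x' x := by
  simp [postNum, pbarAffine_apply, mul_comm]

lemma postDen_apply :
    postDen Q1 Q2 ρ x' x p = pbar ρ p * likeRatio Q1 Q2 x' x + (1 - pbar ρ p) := by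
  simp [postDen, pbarAffine_apply]; ring

lemma post_eq_div : post Q1 Q2 ρ x' x p = postNum Q1 Q2 ρ x' x p / postDen Q1 Q2 ρ x' x p := by
  rw [postNum_apply, postDen_apply, post]

lemma pred_eq_mul_postDen (hQ1 : Q1 x x' ≠ 0) :
    pred Q1 Q2 ρ x' p x = Q1 x x' * postDen Q1 Q2 ρ x' x p := by
  rw [postDen_apply, pred, likeRatio]
  field_simp
  ring

lemma postDen_pos (hQ1 : 0 < Q1 x x') (hQ2 : 0 < Q2 x x') (hρ : ρ ∈ Icc (0 : ℝ) 1)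
    (hp : p ∈ Icc (0 : ℝ) 1) : 0 < postDen Q1 Q2 ρ x' x p := by
  have hL : 0 < likeRatio Q1 Q2 x' x := div_pos hQ2 hQ1
  obtain ⟨h0, h1⟩ := pbar_mem_Icc hρ hp
  rw [postDen_apply]
  rcases h1.eq_or_lt with h1 | h1
  · rw [h1]; linarith
  · have := mul_nonneg h0 hL.le; linarith

lemma post_mem_Icc (hQ1 : 0 < Q1 x x') (hQ2 : 0 < Q2 x x') (hρ : ρ ∈ Icc (0 : ℝ) 1)
    (hp : p ∈ Icc (0 : ℝ) 1) : post Q1 Q2 ρ x' x p ∈ Icc (0 : ℝ) 1 := by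
  have hD := postDen_pos hQ1 hQ2 hρ hp
  obtain ⟨h0, h1⟩ := pbar_mem_Icc hρ hp
  have hN : 0 ≤ postNum Q1 Q2 ρ x' x p := by
    rw [postNum_apply]; exact mul_nonneg h0 (div_pos hQ2 hQ1).le
  rw [post_eq_div]
  refine ⟨div_nonneg hN hD.le, (div_le_one hD).2 ?_⟩
  rw [postNum_apply, postDen_apply]
  linarith

lemma pred_nonneg (hQ1 : 0 < Q1 x x') (hQ2 : 0 < Q2 x x') (hρ : ρ ∈ Icc (0 : ℝ) 1)
    (hp : p ∈ Icc (0 : ℝ) 1) : 0 ≤ pred Q1 Q2 ρ x' p x := by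
  rw [pred_eq_mul_postDen hQ1.ne']
  exact mul_nonneg hQ1.le (postDen_pos hQ1 hQ2 hρ hp).le

lemma pred_mul_one_sub_post (hQ1 : 0 < Q1 x x') (hQ2 : 0 < Q2 x x') (hρ : ρ ∈ Icc (0 : ℝ) 1)
    (hp : p ∈ Icc (0 : ℝ) 1) :
    pred Q1 Q2 ρ x' p x * (1 - post Q1 Q2 ρ x' x p) = Q1 x x' * (1 - pbar ρ p) := by
  have hD := postDen_pos hQ1 hQ2 hρ hp
  rw [pred_eq_mul_postDen hQ1.ne', post_eq_div, mul_assoc, mul_one_sub, mul_div_cancel₀ _ hD.ne',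
    postNum_apply, postDen_apply]
  ring

end Posterior

section Bellman

variable {S : Type*} {Q1 Q2 : S → S → ℝ} {ρ lam : ℝ}

lemma concaveOn_stopCost (hlam : 0 ≤ lam) : ConcaveOn ℝ (Icc 0 1) (fun p : ℝ => lam * (1 - p)) :=
  ((concaveOn_const 1 (convex_Icc 0 1)).sub (convexOn_id (convex_Icc 0 1))).smul hlam

variable (lam) in
structure Admissible (V : ℝ → S → ℝ) : Prop where
  concaveOn : ∀ x, ConcaveOn ℝ (Icc 0 1) (V · x)
  nonneg : ∀ x, ∀ p ∈ Icc (0 : ℝ) 1, 0 ≤ V p x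
  le_stopCost : ∀ x, ∀ p ∈ Icc (0 : ℝ) 1, V p x ≤ lam * (1 - p)

lemma admissible_psi (hlam : 0 ≤ lam) : Admissible lam (psi S lam) where
  concaveOn _ := concaveOn_stopCost hlam
  nonneg _ _ hp := mul_nonneg hlam (sub_nonneg.2 hp.2)
  le_stopCost _ _ _ := le_rfl

namespace Admissible

variable {V : ℝ → S → ℝ}

lemma apply_one (hV : Admissible lam V) (x : S) : V 1 x = 0 := by
  have h := hV.le_stopCost x 1 (right_mem_Icc.2 zero_le_one)
  rw [sub_self, mul_zero] at h
  exact h.antisymm (hV.nonneg x 1 (right_mem_Icc.2 zero_le_one))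

lemma of_tendsto {α : Type*} {l : Filter α} [l.NeBot] {F : α → ℝ → S → ℝ}
    (hF : ∀ k, Admissible lam (F k))
    (hlim : ∀ p ∈ Icc (0 : ℝ) 1, ∀ x, Tendsto (fun k => F k p x) l (𝓝 (V p x))) :
    Admissible lam V where
  concaveOn x := concaveOn_of_tendsto (convex_Icc 0 1) (fun k => (hF k).concaveOn x)
    fun p hp => hlim p hp x
  nonneg x p hp := ge_of_tendsto (hlim p hp x) (.of_forall fun k => (hF k).nonneg x p hp)
  le_stopCost x p hp := le_of_tendsto (hlim p hp x) (.of_forall fun k => (hF k).le_stopCost x p hp)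

end Admissible

variable [Fintype S]

variable (Q1 Q2 ρ) in
/-- The continuation value `A(p,x)`. -/
def contValue (V : ℝ → S → ℝ) (p : ℝ) (x : S) : ℝ :=
  ∑ x' : S, pred Q1 Q2 ρ x' p x * V (post Q1 Q2 ρ x' x p) x'

lemma concaveOn_contValue (hQ1 : ∀ x x', 0 < Q1 x x') (hQ2 : ∀ x x', 0 < Q2 x x')
    (hρ : ρ ∈ Icc (0 : ℝ) 1) {V : ℝ → S → ℝ} (hV : ∀ x, ConcaveOn ℝ (Icc 0 1) (V · x)) (x : S) :
    ConcaveOn ℝ (Icc 0 1) (contValue Q1 Q2 ρ V · x) := by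
  refine concaveOn_finset_sum (convex_Icc 0 1) fun x' _ => ?_
  have hD := fun p (hp : p ∈ Icc (0 : ℝ) 1) => postDen_pos (hQ1 x x') (hQ2 x x') hρ hp
  have hI := fun p (hp : p ∈ Icc (0 : ℝ) 1) => post_eq_div ▸ post_mem_Icc (hQ1 x x') (hQ2 x x') hρ hp
  refine (((hV x').perspective_comp (convex_Icc 0 1) _ _ hD hI).smul (hQ1 x x').le).congr
    fun p _ => ?_
  rw [pred_eq_mul_postDen (hQ1 x x').ne', post_eq_div, mul_assoc]
  rfl

lemma contValue_le (hQ1 : ∀ x x', 0 < Q1 x x') (hQ2 : ∀ x x', 0 < Q2 x x')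
    (hQ1row : ∀ x, ∑ x', Q1 x x' = 1) (hρ : ρ ∈ Icc (0 : ℝ) 1) {V : ℝ → S → ℝ}
    (hV : Admissible lam V) {p : ℝ} (hp : p ∈ Icc (0 : ℝ) 1) (x : S) :
    contValue Q1 Q2 ρ V p x ≤ lam * (1 - ρ) * (1 - p) := by
  calc contValue Q1 Q2 ρ V p x
      ≤ ∑ x', pred Q1 Q2 ρ x' p x * (lam * (1 - post Q1 Q2 ρ x' x p)) := by
        refine Finset.sum_le_sum fun x' _ => mul_le_mul_of_nonneg_left ?_ ?_
        · exact hV.le_stopCost x' _ (post_mem_Icc (hQ1 x x') (hQ2 x x') hρ hp)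
        · exact pred_nonneg (hQ1 x x') (hQ2 x x') hρ hp
    _ = ∑ x', lam * (1 - pbar ρ p) * Q1 x x' := by
        refine Finset.sum_congr rfl fun x' _ => ?_
        rw [mul_left_comm, pred_mul_one_sub_post (hQ1 x x') (hQ2 x x') hρ hp]
        ring
    _ = lam * (1 - ρ) * (1 - p) := by
        rw [← Finset.mul_sum, hQ1row, mul_one, one_sub_pbar, mul_assoc]

lemma contValue_nonneg (hQ1 : ∀ x x', 0 < Q1 x x') (hQ2 : ∀ x x', 0 < Q2 x x')
    (hρ : ρ ∈ Icc (0 : ℝ) 1) {V : ℝ → S → ℝ} (hV : Admissible lam V) {p : ℝ}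
    (hp : p ∈ Icc (0 : ℝ) 1) (x : S) : 0 ≤ contValue Q1 Q2 ρ V p x :=
  Finset.sum_nonneg fun x' _ => mul_nonneg (pred_nonneg (hQ1 x x') (hQ2 x x') hρ hp)
    (hV.nonneg x' _ (post_mem_Icc (hQ1 x x') (hQ2 x x') hρ hp))

lemma Admissible.bell (hQ1 : ∀ x x', 0 < Q1 x x') (hQ2 : ∀ x x', 0 < Q2 x x')
    (hρ : ρ ∈ Icc (0 : ℝ) 1) (hlam : 0 ≤ lam) {V : ℝ → S → ℝ} (hV : Admissible lam V) :
    Admissible lam (bell Q1 Q2 ρ lam V) where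
  concaveOn x := (concaveOn_stopCost hlam).inf
    ((concaveOn_id (convex_Icc 0 1)).add (concaveOn_contValue hQ1 hQ2 hρ hV.concaveOn x))
  nonneg x _ hp := le_min (mul_nonneg hlam (sub_nonneg.2 hp.2))
    (add_nonneg hp.1 (contValue_nonneg hQ1 hQ2 hρ hV hp x))
  le_stopCost _ _ _ := min_le_left _ _

lemma admissible_iterate_bell (hQ1 : ∀ x x', 0 < Q1 x x') (hQ2 : ∀ x x', 0 < Q2 x x')
    (hρ : ρ ∈ Icc (0 : ℝ) 1) (hlam : 0 ≤ lam) (k : ℕ) :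
    Admissible lam ((bell Q1 Q2 ρ lam)^[k] (psi S lam)) := by
  induction k with
  | zero => exact admissible_psi hlam
  | succ k ih =>
    rw [Function.iterate_succ_apply']
    exact ih.bell hQ1 hQ2 hρ hlam

end Bellman

theorem stmt_12_general {S : Type*} [Fintype S]
    (Q1 Q2 : S → S → ℝ)
    (hQ1pos : ∀ x x', 0 < Q1 x x') (hQ2pos : ∀ x x', 0 < Q2 x x')
    (hQ1row : ∀ x, ∑ x', Q1 x x' = 1)
    (ρ : ℝ) (hρ : ρ ∈ Set.Ioo (0 : ℝ) 1)
    (lam : ℝ) (hlam : 0 < lam)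
    (W : ℝ → S → ℝ)
    (hW : ∀ p ∈ Set.Icc (0 : ℝ) 1, ∀ x : S,
        Filter.Tendsto (fun k : ℕ => ((bell Q1 Q2 ρ lam)^[k] (psi S lam)) p x)
          Filter.atTop (nhds (W p x))) :
    ∀ x : S,
      ConcaveOn ℝ (Set.Icc (0 : ℝ) 1) (fun p => W p x) ∧
      W 1 x = 0 ∧
      ∀ p ∈ Set.Icc (0 : ℝ) 1,
        0 ≤ (∑ x' : S, pred Q1 Q2 ρ x' p x * W (post Q1 Q2 ρ x' x p) x') ∧
        (∑ x' : S, pred Q1 Q2 ρ x' p x * W (post Q1 Q2 ρ x' x p) x')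
          ≤ lam * (1 - ρ) * (1 - p) := by
  have hρ' : ρ ∈ Icc (0 : ℝ) 1 := Ioo_subset_Icc_self hρ
  have hWadm : Admissible lam W :=
    .of_tendsto (admissible_iterate_bell hQ1pos hQ2pos hρ' hlam.le) hW
  intro x
  exact ⟨hWadm.concaveOn x, hWadm.apply_one x, fun p hp =>
    ⟨contValue_nonneg hQ1pos hQ2pos hρ' hWadm hp x,
      contValue_le hQ1pos hQ2pos hQ1row hρ' hWadm hp x⟩⟩

theorem stmt_12 {S : Type*} [Fintype S] [Nonempty S]
    (Q1 Q2 : S → S → ℝ)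
    (hQ1pos : ∀ x x', 0 < Q1 x x') (hQ2pos : ∀ x x', 0 < Q2 x x')
    (hQ1row : ∀ x, ∑ x', Q1 x x' = 1) (hQ2row : ∀ x, ∑ x', Q2 x x' = 1)
    (ρ : ℝ) (hρ : ρ ∈ Set.Ioo (0 : ℝ) 1)
    (lam : ℝ) (hlam : 0 < lam)
    (W : ℝ → S → ℝ)
    (hW : ∀ p ∈ Set.Icc (0 : ℝ) 1, ∀ x : S,
        Filter.Tendsto (fun k : ℕ => ((bell Q1 Q2 ρ lam)^[k] (psi S lam)) p x)
          Filter.atTop (nhds (W p x))) :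
    ∀ x : S,
      ConcaveOn ℝ (Set.Icc (0 : ℝ) 1) (fun p => W p x) ∧
      W 1 x = 0 ∧
      ∀ p ∈ Set.Icc (0 : ℝ) 1,
        0 ≤ (∑ x' : S, pred Q1 Q2 ρ x' p x * W (post Q1 Q2 ρ x' x p) x') ∧
        (∑ x' : S, pred Q1 Q2 ρ x' p x * W (post Q1 Q2 ρ x' x p) x')
          ≤ lam * (1 - ρ) * (1 - p) :=
  stmt_12_general Q1 Q2 hQ1pos hQ2pos hQ1row ρ hρ lam hlam W hW
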